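/- Let A be an n×n positive semidefinite Hermitian matrix of rank one, and let B be an n×n Hermitian matrix such that both A+B and A−B are positive semidefinite. Then B is a scalar multiple of A. -/

import Mathlib

/-!
If `A ± B ≥ 0` and `A x = 0`, then `±x* B x ≥ 0`, so `x* (A + B) x = 0` and hence `B x = 0`.
By the spectral theorem a Hermitian `A` of rank one is `r • u u*` with `u` a unit vector, so `B`
vanishes on `u^⊥`. With `P = u u*` this gives `B = B P`, and `B = P B` by taking adjoints, so
`B = P B P = (u* B u) • P`, where `u* B u` is real because `B` is Hermitian.
-/

open scoped ComplexOrder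
open Matrix

namespace Matrix

variable {𝕜 n : Type*} [RCLike 𝕜] [Fintype n]

theorem mulVec_eq_zero_of_posSemidef_add_of_posSemidef_sub {A B : Matrix n n 𝕜}
    (hadd : (A + B).PosSemidef) (hsub : (A - B).PosSemidef) {x : n → 𝕜} (hx : A *ᵥ x = 0) :
    B *ᵥ x = 0 := by
  have hBx : star x ⬝ᵥ B *ᵥ x = 0 := by
    have h₁ := hadd.dotProduct_mulVec_nonneg x
    have h₂ := hsub.dotProduct_mulVec_nonneg x
    simp only [add_mulVec, sub_mulVec, hx, zero_add, zero_sub, dotProduct_neg,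
      neg_nonneg] at h₁ h₂
    exact le_antisymm h₂ h₁
  have h : (A + B) *ᵥ x = 0 :=
    (hadd.dotProduct_mulVec_zero_iff x).mp (by rw [add_mulVec, hx, zero_add, hBx])
  rwa [add_mulVec, hx, zero_add] at h

theorem IsHermitian.eq_smul_vecMulVec_star_of_mulVec_eq_zero {B : Matrix n n 𝕜}
    (hB : B.IsHermitian) {u : n → 𝕜} (hu : star u ⬝ᵥ u = 1)
    (hker : ∀ x, star u ⬝ᵥ x = 0 → B *ᵥ x = 0) :
    B = (star u ⬝ᵥ B *ᵥ u) • vecMulVec u (star u) := by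
  set P := vecMulVec u (star u)
  have hP : Pᴴ = P := by simp [P, conjTranspose_vecMulVec]
  have hBP : B * P = B := by
    refine ext_iff_mulVec.mpr fun x => ?_
    have hPx : P *ᵥ x = (star u ⬝ᵥ x) • u := by
      rw [vecMulVec_mulVec, op_smul_eq_smul]
    have hperp : star u ⬝ᵥ (x - P *ᵥ x) = 0 := by
      rw [dotProduct_sub, hPx, dotProduct_smul, hu, smul_eq_mul, mul_one, sub_self]
    rw [← mulVec_mulVec, ← sub_eq_zero, ← mulVec_sub, ← neg_eq_zero, ← mulVec_neg, neg_sub]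
    exact hker _ hperp
  have hPB : P * B = B := by
    simpa [conjTranspose_mul, hP, hB.eq] using congrArg (·ᴴ) hBP
  calc B = P * (B * P) := by rw [hBP, hPB]
    _ = (star u ⬝ᵥ B *ᵥ u) • P := by
      rw [mul_vecMulVec, vecMulVec_mul_vecMulVec, vecMulVec_smul]

theorem IsHermitian.exists_eq_smul_vecMulVec_star_of_rank_eq_one [DecidableEq n]
    {A : Matrix n n 𝕜} (hA : A.IsHermitian) (hrank : A.rank = 1) :
    ∃ (r : ℝ) (u : n → 𝕜), r ≠ 0 ∧ star u ⬝ᵥ u = 1 ∧ A = (r : 𝕜) • vecMulVec u (star u) := by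
  obtain ⟨⟨j, hj⟩, hunique⟩ := Fintype.card_eq_one_iff.mp
    (hA.rank_eq_card_non_zero_eigs.symm.trans hrank)
  have heig : hA.eigenvalues = Pi.single j (hA.eigenvalues j) := by
    ext m
    by_cases hm : m = j
    · subst hm; simp
    · rw [Pi.single_eq_of_ne hm]
      by_contra h
      exact hm (congrArg Subtype.val (hunique ⟨m, h⟩))
  set U : Matrix n n 𝕜 := (hA.eigenvectorUnitary : Matrix n n 𝕜)
  refine ⟨hA.eigenvalues j, U *ᵥ Pi.single j 1, hj, ?_, ?_⟩
  · rw [star_mulVec, ← dotProduct_mulVec, mulVec_mulVec, ← star_eq_conjTranspose,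
      Unitary.coe_star_mul_self, one_mulVec]
    simp
  · have hD : diagonal (RCLike.ofReal ∘ hA.eigenvalues) =
        ((hA.eigenvalues j : ℝ) : 𝕜) • vecMulVec (Pi.single j (1 : 𝕜)) (star (Pi.single j 1)) := by
      ext a b
      rw [heig]
      by_cases ha : a = j <;> by_cases hb : b = j <;>
        simp [ha, hb, @eq_comm _ j, diagonal_apply, vecMulVec_apply]
    conv_lhs => rw [hA.spectral_theorem, Unitary.conjStarAlgAut_apply, hD]
    rw [Matrix.mul_smul, Matrix.smul_mul, mul_vecMulVec, vecMulVec_mul, star_mulVec,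
      star_eq_conjTranspose]

end Matrix

theorem rank_one_sandwich_linear_dependent {n : ℕ}
    (A B : Matrix (Fin n) (Fin n) ℂ)
    (hA : A.PosSemidef) (hrank : A.rank = 1)
    (hB : B.IsHermitian)
    (hAB : (A + B).PosSemidef) (hAB' : (A - B).PosSemidef) :
    ∃ c : ℝ, B = (c : ℂ) • A := by
  obtain ⟨r, u, hr, hu, rfl⟩ := hA.isHermitian.exists_eq_smul_vecMulVec_star_of_rank_eq_one hrank
  have hker : ∀ x, star u ⬝ᵥ x = 0 → B *ᵥ x = 0 := fun x hx =>
    mulVec_eq_zero_of_posSemidef_add_of_posSemidef_sub hAB hAB' <| by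
      rw [smul_mulVec, vecMulVec_mulVec, hx, MulOpposite.op_zero, zero_smul, smul_zero]
  set μ := star u ⬝ᵥ B *ᵥ u
  have hμ : (μ.re : ℂ) = μ := Complex.ext rfl (hB.im_star_dotProduct_mulVec_self u).symm
  refine ⟨μ.re / r, ?_⟩
  rw [RCLike.ofReal_eq_complex_ofReal, smul_smul, ← Complex.ofReal_mul, div_mul_cancel₀ _ hr, hμ]
  exact hB.eq_smul_vecMulVec_star_of_mulVec_eq_zero hu hker
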